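/- arXiv:1503.03670 — 2 statements merged into one kernel-verified Lean document; each statement's English description precedes it below -/
import Mathlib

section
/- Let a²,b²,c² > 0. The minimum set of the bulk potential f_bulk over S₀ is exactly the set S₊ = { s₊(n⊗n − (1/3)I₃) : n ∈ 𝕊² } of uniaxial tensors with order parameter s₊; that is, for every Q ∈ S₀ and every unit vector n ∈ ℝ³ one has f_bulk(Q) ≥ f_bulk(s₊(n⊗n − (1/3)I₃)), with equality if and only if Q = s₊(m⊗m − (1/3)I₃) for some unit vector m ∈ ℝ³. -/
/-!
Diagonalise `Q = ∑ λᵢ uᵢ uᵢᵀ`. Then `f_bulk(Q)` depends only on `p = ∑ λᵢ²` and `q = ∑ λᵢ³`, and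
for `∑ λᵢ = 0` one has `6 q² ≤ p³`. Writing `p = 2s²/3`, this reads `q ≤ 2s³/9`, with equality
exactly for the uniaxial spectrum `(2s/3, -s/3, -s/3)`; since `f_bulk` decreases in `q`, `f_bulk(Q)`
is at least the value `φ(s)` of the uniaxial tensor with order parameter `s`. Finally
`φ(s) - φ(s₊) = (s - s₊)² (c²(s + s₊)² - b²(2s + s₊)/3) / 9` because `s₊` solves
`2c²s² = b²s + 3a²`, and the second factor is positive for `s ≥ 0`. In the equality case the
spectrum is `(2s₊/3, -s₊/3, -s₊/3)`, i.e. `Q = s₊ (m ⊗ m - I₃/3)` for the eigenvector `m` of the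
simple eigenvalue.
-/

open Real Matrix

noncomputable section

abbrev Mat3 := Matrix (Fin 3) (Fin 3) ℝ

/-- `Q` is a symmetric traceless 3×3 real matrix, i.e. an element of `S₀`. -/
def isS0 (Q : Mat3) : Prop := Qᵀ = Q ∧ Q.trace = 0

/-- The Landau-de Gennes bulk potential. -/
def fbulk (a2 b2 c2 : ℝ) (Q : Mat3) : ℝ :=
  -(a2/2) * (Q*Q).trace - (b2/3) * (Q*Q*Q).trace + (c2/4) * ((Q*Q).trace)^2

/-- The constant `s₊ = (b² + √(b⁴ + 24a²c²))/(4c²)`. -/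
def splus (a2 b2 c2 : ℝ) : ℝ := (b2 + Real.sqrt (b2^2 + 24*a2*c2)) / (4*c2)

def bulkPotential (a2 b2 c2 p q : ℝ) : ℝ := -(a2/2) * p - (b2/3) * q + (c2/4) * p^2

lemma six_mul_sq_sum_cubes_le (x y z : ℝ) (h : x + y + z = 0) :
    6 * (x^3 + y^3 + z^3)^2 ≤ (x^2 + y^2 + z^2)^3 := by
  obtain rfl : z = -x - y := by linarith
  nlinarith [sq_nonneg ((x - y) * (x + 2*y) * (2*x + y))]

lemma eq_or_eq_of_power_sums {s x y z : ℝ} (h1 : x + y + z = 0)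
    (h2 : x^2 + y^2 + z^2 = 2*s^2/3) (h3 : x^3 + y^3 + z^3 = 2*s^3/9) :
    x = 2*s/3 ∨ x = -s/3 := by
  have he2 : x*y + y*z + z*x = -s^2/3 := by
    linear_combination ((x + y + z)/2) * h1 - h2/2
  have he3 : x*y*z = 2*s^3/27 := by
    linear_combination h3/3 - ((x^2 + y^2 + z^2 - x*y - y*z - z*x)/3) * h1
  have key : (x - 2*s/3) * (x + s/3)^2 = 0 := by
    linear_combination x^2 * h1 - x * he2 + he3
  rcases mul_eq_zero.mp key with h | h
  · left; linarith
  · right; linarith [pow_eq_zero_iff (n := 2) two_ne_zero |>.mp h]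

lemma splus_pos {a2 b2 c2 : ℝ} (ha : 0 < a2) (hb : 0 < b2) (hc : 0 < c2) :
    0 < splus a2 b2 c2 := by
  unfold splus
  positivity

lemma splus_root {a2 b2 c2 : ℝ} (ha : 0 < a2) (hc : 0 < c2) :
    2 * c2 * splus a2 b2 c2 ^ 2 = b2 * splus a2 b2 c2 + 3 * a2 := by
  have hr : √(b2^2 + 24*a2*c2) ^ 2 = b2^2 + 24*a2*c2 := Real.sq_sqrt (by positivity)
  unfold splus
  generalize √(b2^2 + 24*a2*c2) = r at hr
  field_simp
  linear_combination 2 * hr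

lemma bulkPotential_uniaxial_sub {a2 b2 c2 t : ℝ} (ht : 2 * c2 * t^2 = b2 * t + 3 * a2) (s : ℝ) :
    bulkPotential a2 b2 c2 (2*s^2/3) (2*s^3/9) - bulkPotential a2 b2 c2 (2*t^2/3) (2*t^3/9)
      = (s - t)^2 * (c2 * (s + t)^2 - b2/3 * (2*s + t)) / 9 := by
  unfold bulkPotential
  linear_combination (s^2 - t^2) / 9 * ht

lemma uniaxial_factor_pos {a2 b2 c2 t s : ℝ} (ha : 0 < a2) (hb : 0 < b2)
    (ht : 2 * c2 * t^2 = b2 * t + 3 * a2) (htpos : 0 < t) (hs : 0 ≤ s) :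
    0 < c2 * (s + t)^2 - b2/3 * (2*s + t) := by
  have hct : b2 < 2 * c2 * t := by nlinarith
  have hc : 0 < c2 := by nlinarith
  nlinarith [mul_pos hc (mul_pos htpos htpos), sq_nonneg s]

lemma bulkPotential_uniaxial_le {a2 b2 c2 t s : ℝ} (ha : 0 < a2) (hb : 0 < b2)
    (ht : 2 * c2 * t^2 = b2 * t + 3 * a2) (htpos : 0 < t) (hs : 0 ≤ s) :
    bulkPotential a2 b2 c2 (2*t^2/3) (2*t^3/9) ≤ bulkPotential a2 b2 c2 (2*s^2/3) (2*s^3/9) := by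
  have := bulkPotential_uniaxial_sub ht s
  have := uniaxial_factor_pos ha hb ht htpos hs
  nlinarith [sq_nonneg (s - t)]

lemma eq_of_bulkPotential_uniaxial_eq {a2 b2 c2 t s : ℝ} (ha : 0 < a2) (hb : 0 < b2)
    (ht : 2 * c2 * t^2 = b2 * t + 3 * a2) (htpos : 0 < t) (hs : 0 ≤ s)
    (heq : bulkPotential a2 b2 c2 (2*s^2/3) (2*s^3/9)
      = bulkPotential a2 b2 c2 (2*t^2/3) (2*t^3/9)) :
    s = t := by
  have hsub := bulkPotential_uniaxial_sub ht s
  rw [heq, sub_self, eq_comm, div_eq_zero_iff, mul_eq_zero] at hsub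
  have := uniaxial_factor_pos ha hb ht htpos hs
  rcases hsub with (h | h) | h
  · linarith [pow_eq_zero_iff (n := 2) two_ne_zero |>.mp h]
  · linarith
  · norm_num at h

lemma bulkPotential_le_of_sum_eq_zero {a2 b2 c2 t x y z : ℝ} (ha : 0 < a2) (hb : 0 < b2)
    (ht : 2 * c2 * t^2 = b2 * t + 3 * a2) (htpos : 0 < t) (hsum : x + y + z = 0) :
    bulkPotential a2 b2 c2 (2*t^2/3) (2*t^3/9)
        ≤ bulkPotential a2 b2 c2 (x^2 + y^2 + z^2) (x^3 + y^3 + z^3) ∧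
      (bulkPotential a2 b2 c2 (x^2 + y^2 + z^2) (x^3 + y^3 + z^3)
          = bulkPotential a2 b2 c2 (2*t^2/3) (2*t^3/9) →
        x^2 + y^2 + z^2 = 2*t^2/3 ∧ x^3 + y^3 + z^3 = 2*t^3/9) := by
  set p := x^2 + y^2 + z^2
  set q := x^3 + y^3 + z^3
  set s := √(3*p/2)
  have hs : 0 ≤ s := Real.sqrt_nonneg _
  have hp : p = 2*s^2/3 := by rw [Real.sq_sqrt (by positivity)]; ring
  have hq : q ≤ 2*s^3/9 := by
    have h6 : 6 * q^2 ≤ p^3 := six_mul_sq_sum_cubes_le x y z hsum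
    refine (abs_le_of_sq_le_sq' ?_ (by positivity)).2
    rw [hp] at h6
    nlinarith
  have hsplit : bulkPotential a2 b2 c2 p q
      = bulkPotential a2 b2 c2 (2*s^2/3) (2*s^3/9) + b2/3 * (2*s^3/9 - q) := by
    unfold bulkPotential; rw [hp]; ring
  have hts := bulkPotential_uniaxial_le ha hb ht htpos hs
  have hgap : 0 ≤ b2/3 * (2*s^3/9 - q) := mul_nonneg (by positivity) (by linarith)
  refine ⟨by linarith, fun heq => ?_⟩
  have hqs : q = 2*s^3/9 := by nlinarith
  have hst : s = t := eq_of_bulkPotential_uniaxial_eq ha hb ht htpos hs (by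
    rw [hsplit, hqs, sub_self, mul_zero, add_zero] at heq; exact heq)
  exact ⟨by rw [hp, hst], by rw [hqs, hst]⟩

section RankOne

variable {ι : Type*} [Fintype ι] [DecidableEq ι]

lemma Matrix.IsSymm.exists_sum_smul_vecMulVec {Q : Matrix ι ι ℝ} (hQ : Q.IsSymm) :
    ∃ (l : ι → ℝ) (u : ι → ι → ℝ), (∀ i j, u i ⬝ᵥ u j = if i = j then 1 else 0) ∧
      Q = ∑ i, l i • vecMulVec (u i) (u i) ∧ ∑ i, vecMulVec (u i) (u i) = 1 := by
  have hH : Q.IsHermitian := by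
    rw [Matrix.IsHermitian, conjTranspose_eq_transpose_of_trivial, hQ]
  have hU := hH.eigenvectorUnitary.2
  refine ⟨hH.eigenvalues, fun i => hH.eigenvectorBasis i, fun i j => ?_, ?_, ?_⟩
  · simpa [mul_apply, dotProduct, one_apply] using
      congrFun (congrFun ((Matrix.mem_unitaryGroup_iff').mp hU) i) j
  · ext j k
    conv_lhs => rw [hH.spectral_theorem]
    simp [Unitary.conjStarAlgAut_apply, mul_apply, diagonal_apply, Matrix.sum_apply,
      vecMulVec_apply, mul_comm, mul_assoc]
  · ext j k
    simpa [mul_apply, Matrix.sum_apply, vecMulVec_apply] using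
      congrFun (congrFun ((Matrix.mem_unitaryGroup_iff).mp hU) j) k

variable {u : ι → ι → ℝ}

lemma sum_smul_vecMulVec_mul_sum (orth : ∀ i j, u i ⬝ᵥ u j = if i = j then 1 else 0)
    (f g : ι → ℝ) :
    (∑ i, f i • vecMulVec (u i) (u i)) * (∑ j, g j • vecMulVec (u j) (u j))
      = ∑ i, (f i * g i) • vecMulVec (u i) (u i) := by
  rw [Finset.sum_mul]
  refine Finset.sum_congr rfl fun i _ => ?_
  rw [Finset.mul_sum, Finset.sum_eq_single i (fun j _ hji => ?_) (by simp)]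
  · rw [smul_mul_smul_comm, vecMulVec_mul_vecMulVec, orth, if_pos rfl, one_smul]
  · rw [smul_mul_smul_comm, vecMulVec_mul_vecMulVec, orth, if_neg hji.symm, zero_smul,
      vecMulVec_zero, smul_zero]

lemma trace_sum_smul_vecMulVec (orth : ∀ i j, u i ⬝ᵥ u j = if i = j then 1 else 0)
    (c : ι → ℝ) : (∑ i, c i • vecMulVec (u i) (u i)).trace = ∑ i, c i := by
  simp [trace_sum, orth]

lemma sum_smul_vecMulVec_eq_uniaxial (hone : ∑ i, vecMulVec (u i) (u i) = 1) (t : ℝ) (i₀ : ι) :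
    ∑ i, (if i = i₀ then 2*t/3 else -t/3) • vecMulVec (u i) (u i)
      = t • (vecMulVec (u i₀) (u i₀) - (1/3 : ℝ) • 1) := by
  have hsplit : ∀ i, (if i = i₀ then 2*t/3 else -t/3) = -t/3 + if i = i₀ then t else 0 := by
    intro i; split_ifs <;> ring
  simp_rw [hsplit, add_smul, Finset.sum_add_distrib, ← Finset.smul_sum, hone, ite_smul,
    zero_smul, Finset.sum_ite_eq', Finset.mem_univ, if_true]
  module

end RankOne

lemma fbulk_eq_bulkPotential (a2 b2 c2 : ℝ) (Q : Mat3) :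
    fbulk a2 b2 c2 Q = bulkPotential a2 b2 c2 (Q*Q).trace (Q*Q*Q).trace := rfl

lemma fbulk_sum_smul_vecMulVec (a2 b2 c2 : ℝ) {u : Fin 3 → Fin 3 → ℝ}
    (orth : ∀ i j, u i ⬝ᵥ u j = if i = j then 1 else 0) (l : Fin 3 → ℝ) :
    fbulk a2 b2 c2 (∑ i, l i • vecMulVec (u i) (u i))
      = bulkPotential a2 b2 c2 (l 0^2 + l 1^2 + l 2^2) (l 0^3 + l 1^3 + l 2^3) := by
  rw [fbulk_eq_bulkPotential, sum_smul_vecMulVec_mul_sum orth, sum_smul_vecMulVec_mul_sum orth,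
    trace_sum_smul_vecMulVec orth, trace_sum_smul_vecMulVec orth]
  simp only [Fin.sum_univ_three]
  ring_nf

lemma fbulk_uniaxial (a2 b2 c2 s : ℝ) {n : Fin 3 → ℝ} (hn : ∑ i, n i ^ 2 = 1) :
    fbulk a2 b2 c2 (s • (vecMulVec n n - (1/3 : ℝ) • 1))
      = bulkPotential a2 b2 c2 (2*s^2/3) (2*s^3/9) := by
  set P := vecMulVec n n
  have hnn : n ⬝ᵥ n = 1 := by simpa [dotProduct, sq] using hn
  have hPP : P * P = P := by rw [vecMulVec_mul_vecMulVec, hnn, one_smul]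
  have htrP : P.trace = 1 := by rw [trace_vecMulVec, hnn]
  have hB2 : (s • (P - (1/3 : ℝ) • 1)) * (s • (P - (1/3 : ℝ) • 1))
      = (s^2/3) • P + (s^2/9) • 1 := by
    simp only [sub_mul, mul_sub, smul_mul_assoc, mul_smul_comm, one_mul, mul_one, hPP]
    module
  have hB3 : ((s^2/3) • P + (s^2/9) • 1) * (s • (P - (1/3 : ℝ) • 1))
      = (s^3/3) • P - (s^3/27) • 1 := by
    simp only [add_mul, mul_smul_comm, mul_sub, smul_mul_assoc, one_mul, mul_one, hPP]
    module
  rw [fbulk_eq_bulkPotential, hB2, hB3]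
  simp only [trace_add, trace_sub, trace_smul, htrP, trace_one, Fintype.card_fin, smul_eq_mul]
  congr 1 <;> ring

lemma exists_eq_ite_of_power_sums {t : ℝ} (ht : t ≠ 0) {l : Fin 3 → ℝ}
    (hsum : l 0 + l 1 + l 2 = 0) (hp : l 0^2 + l 1^2 + l 2^2 = 2*t^2/3)
    (hq : l 0^3 + l 1^3 + l 2^3 = 2*t^3/9) :
    ∃ i₀, ∀ i, l i = if i = i₀ then 2*t/3 else -t/3 := by
  have h0 := eq_or_eq_of_power_sums hsum hp hq
  have h1 := eq_or_eq_of_power_sums (s := t) (x := l 1) (y := l 2) (z := l 0)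
    (by linarith) (by linarith) (by linarith)
  have h2 := eq_or_eq_of_power_sums (s := t) (x := l 2) (y := l 0) (z := l 1)
    (by linarith) (by linarith) (by linarith)
  rcases h0 with h0 | h0 <;> rcases h1 with h1 | h1 <;> rcases h2 with h2 | h2
  · exact absurd (by linarith) ht
  · exact absurd (by linarith) ht
  · exact absurd (by linarith) ht
  · exact ⟨0, fun i => by fin_cases i <;> simp [h0, h1, h2]⟩
  · exact absurd (by linarith) ht
  · exact ⟨1, fun i => by fin_cases i <;> simp [h0, h1, h2]⟩
  · exact ⟨2, fun i => by fin_cases i <;> simp [h0, h1, h2]⟩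
  · exact absurd (by linarith) ht

theorem stmt0 (a2 b2 c2 : ℝ) (ha : 0 < a2) (hb : 0 < b2) (hc : 0 < c2)
    (Q : Mat3) (hQ : isS0 Q) (n : Fin 3 → ℝ) (hn : ∑ i, (n i)^2 = 1) :
    fbulk a2 b2 c2 (splus a2 b2 c2 • (vecMulVec n n - (1/3 : ℝ) • (1 : Mat3))) ≤ fbulk a2 b2 c2 Q ∧
    (fbulk a2 b2 c2 Q = fbulk a2 b2 c2 (splus a2 b2 c2 • (vecMulVec n n - (1/3 : ℝ) • (1 : Mat3))) ↔
      ∃ m : Fin 3 → ℝ, (∑ i, (m i)^2 = 1) ∧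
        Q = splus a2 b2 c2 • (vecMulVec m m - (1/3 : ℝ) • (1 : Mat3))) := by
  have htpos := splus_pos ha hb hc
  have ht := splus_root (b2 := b2) ha hc
  set t := splus a2 b2 c2
  obtain ⟨hsymm, htrace⟩ := hQ
  obtain ⟨l, u, orth, rfl, hone⟩ := Matrix.IsSymm.exists_sum_smul_vecMulVec hsymm
  have hsum : l 0 + l 1 + l 2 = 0 := by
    rwa [trace_sum_smul_vecMulVec orth, Fin.sum_univ_three] at htrace
  have hbound := bulkPotential_le_of_sum_eq_zero ha hb ht htpos hsum
  rw [fbulk_uniaxial _ _ _ _ hn, fbulk_sum_smul_vecMulVec _ _ _ orth]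
  refine ⟨hbound.1, fun heq => ?_, ?_⟩
  · obtain ⟨hp, hq⟩ := hbound.2 heq
    obtain ⟨i₀, hl⟩ := exists_eq_ite_of_power_sums htpos.ne' hsum hp hq
    refine ⟨u i₀, by simpa [dotProduct, sq] using orth i₀ i₀, ?_⟩
    simp_rw [hl]
    exact sum_smul_vecMulVec_eq_uniaxial hone t i₀
  · rintro ⟨m, hm, hQm⟩
    rw [← fbulk_sum_smul_vecMulVec _ _ _ orth, hQm, fbulk_uniaxial _ _ _ _ hm]
end
end

section
/- Let 0 < R < ∞ and let w : (0,R) → ℝ be continuously differentiable with ∫₀^R w'(r)² r dr < ∞ and ∫₀^R w(r)²/r dr < ∞. Then lim_{r→0⁺} w(r) = 0. -/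
/-!
Since `|(w²)'| = |2ww'| ≤ w²/r + w'²r`, the derivative of `w²` is integrable on `(0,R)`, so `w²`
has a limit `L ≥ 0` at `0⁺`. If `L > 0`, then `w²/r ≥ L/(2r)` near `0`, which is not integrable;
hence `L = 0`.
-/

open Real Matrix
open scoped ENNReal

noncomputable section

def e1 : Fin 3 → ℝ := ![1, 0, 0]
def e2 : Fin 3 → ℝ := ![0, 1, 0]
def e3 : Fin 3 → ℝ := ![0, 0, 1]

/-- `n(φ) = (cos(kφ/2), sin(kφ/2), 0)`. -/
def nvec (k : ℤ) (φ : ℝ) : Fin 3 → ℝ := ![Real.cos ((k : ℝ) * φ / 2), Real.sin ((k : ℝ) * φ / 2), 0]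

/-- `m(φ) = (−sin(kφ/2), cos(kφ/2), 0)`. -/
def mvec (k : ℤ) (φ : ℝ) : Fin 3 → ℝ := ![-Real.sin ((k : ℝ) * φ / 2), Real.cos ((k : ℝ) * φ / 2), 0]

/-- `I₂ = I₃ − e₃ ⊗ e₃`. -/
def I2 : Mat3 := 1 - vecMulVec e3 e3

def E0 : Mat3 := Real.sqrt (3/2) • (vecMulVec e3 e3 - (1/3 : ℝ) • (1 : Mat3))
def E1 (k : ℤ) (φ : ℝ) : Mat3 :=
  Real.sqrt 2 • (vecMulVec (nvec k φ) (nvec k φ) - (1/2 : ℝ) • I2)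
def E2mat (k : ℤ) (φ : ℝ) : Mat3 :=
  (Real.sqrt 2)⁻¹ • (vecMulVec (nvec k φ) (mvec k φ) + vecMulVec (mvec k φ) (nvec k φ))
def E3mat : Mat3 := (Real.sqrt 2)⁻¹ • (vecMulVec e1 e3 + vecMulVec e3 e1)
def E4mat : Mat3 := (Real.sqrt 2)⁻¹ • (vecMulVec e2 e3 + vecMulVec e3 e2)

/-- The rotation `R_k(ψ)` of winding `k/2` about the vertical axis. -/
def Rk (k : ℤ) (ψ : ℝ) : Mat3 :=
  !![Real.cos ((k : ℝ) * ψ / 2), -Real.sin ((k : ℝ) * ψ / 2), 0;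
     Real.sin ((k : ℝ) * ψ / 2),  Real.cos ((k : ℝ) * ψ / 2), 0;
     0, 0, 1]

/-- Laplacian of a scalar function on `ℝ²`, as the sum of the two repeated partial
derivatives along the coordinate axes. -/
def lap (f : ℝ × ℝ → ℝ) (p : ℝ × ℝ) : ℝ :=
  deriv (fun t => deriv (fun s => f (s, p.2)) t) p.1 +
  deriv (fun t => deriv (fun s => f (p.1, s)) t) p.2

/-- Componentwise Laplacian of a matrix-valued map on `ℝ²`. -/
def matLap (Q : ℝ × ℝ → Mat3) (p : ℝ × ℝ) : Mat3 :=
  Matrix.of fun i j => lap (fun x => Q x i j) p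

/-- Squared norm of the gradient of a scalar function on `ℝ²`. -/
def gradNormSq (f : ℝ × ℝ → ℝ) (p : ℝ × ℝ) : ℝ :=
  (fderiv ℝ f p (1, 0))^2 + (fderiv ℝ f p (0, 1))^2

/-- `|∇Q|²`: sum over all matrix entries of the squared norms of their gradients. -/
def matGradNormSq (Q : ℝ × ℝ → Mat3) (p : ℝ × ℝ) : ℝ :=
  ∑ i, ∑ j, gradNormSq (fun x => Q x i j) p

/-- Membership in the open disk of radius `R ∈ (0,∞]` centered at the origin. -/
def inBall (R : ℝ≥0∞) (x : ℝ × ℝ) : Prop :=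
  ENNReal.ofReal (Real.sqrt (x.1^2 + x.2^2)) < R

/-- The right-hand side of the Euler–Lagrange equation
`ΔQ = −a²Q − b²(Q² − (1/3)|Q|²I₃) + c²|Q|²Q`. -/
def ELrhs (a2 b2 c2 : ℝ) (A : Mat3) : Mat3 :=
  -a2 • A - b2 • (A * A - ((1/3 : ℝ) * (A * A).trace) • (1 : Mat3)) + (c2 * (A * A).trace) • A

/-- Frobenius squared norm of a 3×3 matrix. -/
def frobSq (A : Mat3) : ℝ := ∑ i, ∑ j, (A i j)^2

/-- For `x = (x₁,x₂) ∈ ℝ²`, `x̃ = (x₁,x₂,0) ∈ ℝ³`. -/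
def tilde (x : ℝ × ℝ) : Fin 3 → ℝ := ![x.1, x.2, 0]

/-- The projection `P₂(x₁,x₂,x₃) = (x₁,x₂)`. -/
def P2 (v : Fin 3 → ℝ) : ℝ × ℝ := (v 0, v 1)

/-- The antisymmetric matrix `S₀ = e₂⊗e₁ − e₁⊗e₂`. -/
def S0mat : Mat3 := vecMulVec e2 e1 - vecMulVec e1 e2

end

open Filter Topology MeasureTheory Set

lemma abs_two_mul_mul_le_sq_div_add_sq_mul {a b r : ℝ} (hr : 0 < r) :
    |2 * a * b| ≤ a ^ 2 / r + b ^ 2 * r := by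
  have hminus : a ^ 2 / r + b ^ 2 * r - 2 * a * b = (a - b * r) ^ 2 / r := by
    field_simp
    ring
  have hplus : a ^ 2 / r + b ^ 2 * r + 2 * a * b = (a + b * r) ^ 2 / r := by
    field_simp
    ring
  exact abs_le.2 ⟨by linarith [div_nonneg (sq_nonneg (a + b * r)) hr.le],
    by linarith [div_nonneg (sq_nonneg (a - b * r)) hr.le]⟩

lemma integrableOn_two_mul_mul_of_lintegral_weighted_sq_lt_top {f g : ℝ → ℝ} {s : Set ℝ}
    (hs : MeasurableSet s) (hs_pos : s ⊆ Ioi 0)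
    (hf : AEStronglyMeasurable f (volume.restrict s))
    (hg : AEStronglyMeasurable g (volume.restrict s))
    (hf2 : ∫⁻ r in s, ENNReal.ofReal (f r ^ 2 / r) < ⊤)
    (hg2 : ∫⁻ r in s, ENNReal.ofReal (g r ^ 2 * r) < ⊤) :
    IntegrableOn (fun r => 2 * f r * g r) s := by
  have hpos : ∀ᵐ r ∂volume.restrict s, 0 < r :=
    (ae_restrict_mem hs).mono fun r hr => hs_pos hr
  have hf_int : IntegrableOn (fun r => f r ^ 2 / r) s :=
    (lintegral_ofReal_ne_top_iff_integrable
      ((hf.aemeasurable.pow_const 2).div measurable_id.aemeasurable).aestronglyMeasurable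
      (hpos.mono fun r hr => div_nonneg (sq_nonneg _) hr.le)).1 hf2.ne
  have hg_int : IntegrableOn (fun r => g r ^ 2 * r) s :=
    (lintegral_ofReal_ne_top_iff_integrable (by fun_prop)
      (hpos.mono fun r hr => mul_nonneg (sq_nonneg _) hr.le)).1 hg2.ne
  refine (hf_int.add hg_int).mono' ((hf.const_mul 2).mul hg) ?_
  filter_upwards [hpos] with r hr
  exact abs_two_mul_mul_le_sq_div_add_sq_mul hr

lemma exists_tendsto_nhdsGT_of_hasDerivAt_of_integrableOn {E : Type*} [NormedAddCommGroup E]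
    [NormedSpace ℝ E] [CompleteSpace E] {f f' : ℝ → E} {a b : ℝ} (hab : a < b)
    (hderiv : ∀ x ∈ Ioo a b, HasDerivAt f (f' x) x) (hint : IntegrableOn f' (Ioo a b)) :
    ∃ L, Tendsto f (𝓝[>] a) (𝓝 L) := by
  obtain ⟨c, hac, hcb⟩ := exists_between hab
  have hint_c : IntegrableOn f' (uIcc a c) := by
    rw [uIcc_of_le hac.le, integrableOn_Icc_iff_integrableOn_Ioo]
    exact hint.mono_set (Ioo_subset_Ioo_right hcb.le)
  have hftc : ∀ x ∈ Ioo a c, f x = f c - ∫ t in x..c, f' t := by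
    intro x hx
    rw [intervalIntegral.integral_eq_sub_of_hasDerivAt, sub_sub_cancel]
    · intro y hy
      rw [uIcc_of_le hx.2.le] at hy
      exact hderiv y ⟨hx.1.trans_le hy.1, hy.2.trans_lt hcb⟩
    · exact (hint_c.mono_set <| by
        rw [uIcc_of_le hac.le, uIcc_of_le hx.2.le]
        exact Icc_subset_Icc_left hx.1.le).intervalIntegrable
  have hprim : Tendsto (fun x => ∫ t in x..c, f' t) (𝓝[>] a) (𝓝 (∫ t in a..c, f' t)) := by
    have := intervalIntegral.continuousOn_primitive_interval_left hint_c a left_mem_uIcc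
    rw [uIcc_of_le hac.le, ← nhdsWithin_Ioo_eq_nhdsGT hac] at *
    exact this.tendsto.mono_left (nhdsWithin_mono _ Ioo_subset_Icc_self)
  refine ⟨f c - ∫ t in a..c, f' t, (tendsto_const_nhds.sub hprim).congr' ?_⟩
  filter_upwards [Ioo_mem_nhdsGT hac] with x hx
  exact (hftc x hx).symm

lemma lintegral_Ioo_zero_ofReal_const_div_eq_top {c ε : ℝ} (hc : 0 < c) (hε : 0 < ε) :
    ∫⁻ r in Ioo 0 ε, ENNReal.ofReal (c / r) = ⊤ := by
  by_contra hfin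
  have hint : IntegrableOn (fun r => c / r) (Ioo 0 ε) :=
    (lintegral_ofReal_ne_top_iff_integrable (by fun_prop)
      ((ae_restrict_mem measurableSet_Ioo).mono fun r hr => div_nonneg hc.le hr.1.le)).1 hfin
  have hinv : IntervalIntegrable (fun r : ℝ => r⁻¹) volume 0 ε := by
    rw [intervalIntegrable_iff_integrableOn_Ioo_of_le hε.le]
    refine IntegrableOn.congr_fun (hint.const_mul c⁻¹) (fun r _ => ?_) measurableSet_Ioo
    field_simp
  simp [hε.ne] at hinv

lemma lintegral_Ioo_zero_ofReal_div_eq_top_of_tendsto {g : ℝ → ℝ} {L R : ℝ} (hR : 0 < R)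
    (hL : 0 < L) (hg : Tendsto g (𝓝[>] 0) (𝓝 L)) :
    ∫⁻ r in Ioo 0 R, ENNReal.ofReal (g r / r) = ⊤ := by
  obtain ⟨u, hu, hgu⟩ := mem_nhdsGT_iff_exists_Ioo_subset.1
    (hg.eventually (eventually_ge_nhds (half_lt_self hL)))
  refine top_unique ?_
  calc ⊤ = ∫⁻ r in Ioo 0 (min u R), ENNReal.ofReal (L / 2 / r) :=
        (lintegral_Ioo_zero_ofReal_const_div_eq_top (half_pos hL) (lt_min hu hR)).symm
    _ ≤ ∫⁻ r in Ioo 0 (min u R), ENNReal.ofReal (g r / r) := by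
        refine setLIntegral_mono' measurableSet_Ioo fun r hr => ENNReal.ofReal_le_ofReal ?_
        exact div_le_div_of_nonneg_right (hgu ⟨hr.1, hr.2.trans_le (min_le_left _ _)⟩) hr.1.le
    _ ≤ ∫⁻ r in Ioo 0 R, ENNReal.ofReal (g r / r) :=
        lintegral_mono_set (Ioo_subset_Ioo_right (min_le_right _ _))

/-- a `C¹` function on `(0,R)` with `∫₀^R w'(r)² r dr < ∞` and
`∫₀^R w(r)²/r dr < ∞` tends to `0` as `r → 0⁺`. -/
theorem stmt16 (R : ℝ) (hR : 0 < R) (w : ℝ → ℝ)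
    (hw : ContDiffOn ℝ 1 w (Set.Ioo 0 R))
    (h1 : ∫⁻ r in Set.Ioo (0 : ℝ) R, ENNReal.ofReal ((deriv w r)^2 * r) < ⊤)
    (h2 : ∫⁻ r in Set.Ioo (0 : ℝ) R, ENNReal.ofReal ((w r)^2 / r) < ⊤) :
    Filter.Tendsto w (nhdsWithin 0 (Set.Ioi 0)) (nhds 0) := by
  have hderiv : ∀ x ∈ Ioo 0 R, HasDerivAt (fun r => w r ^ 2) (2 * w x * deriv w x) x := by
    intro x hx
    have := (((hw.differentiableOn one_ne_zero).differentiableAt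
      (isOpen_Ioo.mem_nhds hx)).hasDerivAt).fun_pow 2
    simpa [mul_comm, mul_assoc] using this
  have hint : IntegrableOn (fun r => 2 * w r * deriv w r) (Ioo 0 R) :=
    integrableOn_two_mul_mul_of_lintegral_weighted_sq_lt_top measurableSet_Ioo
      Ioo_subset_Ioi_self (hw.continuousOn.aestronglyMeasurable measurableSet_Ioo)
      (measurable_deriv w).aestronglyMeasurable h2 h1
  obtain ⟨L, hL⟩ := exists_tendsto_nhdsGT_of_hasDerivAt_of_integrableOn hR hderiv hint
  have hL_zero : L = 0 := by
    refine le_antisymm (not_lt.1 fun hL_pos => ?_) (ge_of_tendsto' hL fun r => sq_nonneg _)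
    exact h2.ne (lintegral_Ioo_zero_ofReal_div_eq_top_of_tendsto hR hL_pos hL)
  subst hL_zero
  rw [tendsto_zero_iff_abs_tendsto_zero]
  simpa [Real.sqrt_sq_eq_abs, Function.comp_def] using hL.sqrt
end
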